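/- Let I be a Borel fixed ideal of k[x₁,…,xₙ], set h := max{max(m) : m ∈ G(I)}, and assume x_h^{l_I} ∈ G(I) for some l_I > 0 (the Cohen–Macaulay condition). Then for every m ∈ G(I) and every k ∈ supp(m) with k < h, there exists an integer l ≥ 0 such that (m/x_k)·x_{k+1}·x_h^l ∈ G(I). -/

import Mathlib

namespace Paper

/-- A monomial of `k[x₁,…,xₙ]`, identified with its exponent vector. -/
abbrev Mon : Type := ℕ → ℕ

/-- The variable `x_k` as a monomial. -/
def e (k : ℕ) : Mon := fun i => if i = k then 1 else 0

/-- The power `x_k^l` as a monomial. -/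
def xpw (k l : ℕ) : Mon := fun i => if i = k then l else 0

/-- The support of a monomial. -/
def msupp (m : Mon) : Set ℕ := {i | m i ≠ 0}

/-- `max(m)`, the largest index of a variable dividing `m`. -/
noncomputable def mmax (m : Mon) : ℕ := sSup (msupp m)

/-- `min(m)`, the smallest index of a variable dividing `m`. -/
noncomputable def mmin (m : Mon) : ℕ := sInf (msupp m)

/-- A monomial uses only variables `x₁,…,xₙ`. -/
def inVars (n : ℕ) (m : Mon) : Prop := ∀ i, m i ≠ 0 → 1 ≤ i ∧ i ≤ n

/-- A monomial ideal of `k[x₁,…,xₙ]`, identified with its set of monomials, which is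
closed under multiplication by arbitrary monomials. -/
structure MonIdeal (n : ℕ) where
  carrier : Set Mon
  vars_mem : ∀ m ∈ carrier, inVars n m
  mul_mem : ∀ m ∈ carrier, ∀ a : Mon, inVars n a → m + a ∈ carrier

/-- `G(I)`: the set of monomials of `I` minimal under divisibility. -/
def minGens {n : ℕ} (I : MonIdeal n) : Set Mon :=
  {m | m ∈ I.carrier ∧ ∀ m' ∈ I.carrier, m' ≤ m → m' = m}

/-- `I` is stable: for every monomial `m ∈ I` and `1 ≤ i < max(m)`,
`x_i·(m/x_{max(m)}) ∈ I`. -/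
def Stable {n : ℕ} (I : MonIdeal n) : Prop :=
  ∀ m ∈ I.carrier, ∀ i : ℕ, 1 ≤ i → i < mmax m → (m - e (mmax m)) + e i ∈ I.carrier

/-- `I` is Borel fixed: for every monomial `m ∈ I` and `1 ≤ i < j` with `x_j ∣ m`,
`x_i·(m/x_j) ∈ I`. -/
def Borel {n : ℕ} (I : MonIdeal n) : Prop :=
  ∀ m ∈ I.carrier, ∀ i j : ℕ, 1 ≤ i → i < j → m j ≠ 0 → (m - e j) + e i ∈ I.carrier

/-- The lexicographic order `m ≺ m'` on monomials with `x₁ ≻ x₂ ≻ ⋯`. -/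
def mlt (m m' : Mon) : Prop := ∃ i : ℕ, (∀ j, j < i → m j = m' j) ∧ m i < m' i

/-- `g` is the Eliahou–Kervaire decomposition function of `I`: for every monomial `m ∈ I`,
`g m ∈ G(I)`, `g m` divides `m`, and `max(g m) ≤ min(m / g m)`. -/
def IsDecompFn {n : ℕ} (I : MonIdeal n) (g : Mon → Mon) : Prop :=
  ∀ m ∈ I.carrier, g m ∈ minGens I ∧ g m ≤ m ∧ mmax (g m) ≤ mmin (m - g m)

/-- `max { max(m) : m ∈ G(I) }`. -/
noncomputable def hMax {n : ℕ} (I : MonIdeal n) : ℕ :=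
  sSup {j | ∃ m ∈ minGens I, mmax m = j}

/-!
Among the monomials `w_l = (m/x_k)·x_{k+1}·x_h^l` some lie in `I`, because `x_h^{l_I}` divides
`w_{l_I}`; let `l₀` be the least such `l`. A monomial `v ∈ I` lies in `G(I)` as soon as no
`v/x_j` lies in `I`. If `l₀ = 0` and `w_0/x_j ∈ I`, the Borel move `x_{k+1} ↦ x_k` turns it
into `m/x_j` (unless it already is `m/x_k`), contradicting `m ∈ G(I)`. If `l₀ > 0`, every
variable of `w_{l₀}` has index at most `h`, so Borel moves turn `w_{l₀}/x_j ∈ I` into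
`w_{l₀}/x_h = w_{l₀-1} ∈ I`, contradicting the choice of `l₀`.
-/

section MonIdeal

variable {n : ℕ} (I : MonIdeal n)

lemma mem_of_le {u v : Mon} (hu : u ∈ I.carrier) (huv : u ≤ v) (hv : inVars n v) :
    v ∈ I.carrier := by
  have hdiff : inVars n (v - u) := fun i hi => hv i (by simp only [Pi.sub_apply] at hi; omega)
  simpa [add_tsub_cancel_of_le huv] using I.mul_mem u hu (v - u) hdiff

variable {I}

lemma mem_minGens_iff {m : Mon} :
    m ∈ minGens I ↔ m ∈ I.carrier ∧ ∀ j, m j ≠ 0 → m - e j ∉ I.carrier := by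
  refine ⟨fun ⟨hm, hmin⟩ => ⟨hm, fun j hj hsub => ?_⟩, fun ⟨hm, hsub⟩ => ⟨hm, fun u hu hum => ?_⟩⟩
  · have := congrFun (hmin _ hsub tsub_le_self) j
    simp [e] at this
    omega
  · by_contra hne
    obtain ⟨j, hj⟩ : ∃ j, u j < m j := by
      by_contra! hge
      exact hne (le_antisymm hum hge)
    have hvars : inVars n (m - e j) :=
      fun i hi => I.vars_mem m hm i (by simp only [Pi.sub_apply] at hi; omega)
    refine hsub j (by omega) (mem_of_le I hu (fun i => ?_) hvars)
    have := hum i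
    simp only [Pi.sub_apply, e]
    split_ifs with hij
    · subst hij; omega
    · omega

lemma Borel.sub_e_mem_of_le (hI : Borel I) {v : Mon} {i j : ℕ} (hv : v - e i ∈ I.carrier)
    (hi : 1 ≤ i) (hij : i ≤ j) (hvi : v i ≠ 0) (hvj : v j ≠ 0) : v - e j ∈ I.carrier := by
  rcases hij.eq_or_lt with rfl | hij
  · exact hv
  have hj : (v - e i) j ≠ 0 := by simpa [e, hij.ne'] using hvj
  convert hI _ hv i j hi hij hj using 1
  funext x
  simp only [Pi.add_apply, Pi.sub_apply, e]
  split_ifs <;> subst_vars <;> omega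

lemma Borel.sub_e_add_e_succ_mem_minGens (hI : Borel I) {m : Mon} {k : ℕ}
    (hm : m ∈ minGens I) (hk1 : 1 ≤ k) (hk : m k ≠ 0) (hw : m - e k + e (k + 1) ∈ I.carrier) :
    m - e k + e (k + 1) ∈ minGens I := by
  have hgen := (mem_minGens_iff.1 hm).2
  refine mem_minGens_iff.2 ⟨hw, fun j hj hsub => ?_⟩
  simp only [Pi.add_apply, Pi.sub_apply, e] at hj
  by_cases hjk : j = k + 1
  · subst hjk
    exact hgen k hk (by convert hsub using 1; funext x; simp [e])
  · have hmj : m j ≠ 0 := by split_ifs at hj <;> omega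
    have hsucc : (m - e k + e (k + 1) - e j) (k + 1) ≠ 0 := by simp [e, Ne.symm hjk]
    refine hgen j hmj ?_
    convert hI _ hsub k (k + 1) hk1 (lt_add_one k) hsucc using 1
    funext x
    simp only [Pi.add_apply, Pi.sub_apply, e]
    split_ifs at hj ⊢ <;> subst_vars <;> omega

lemma Borel.mem_minGens_of_sub_e_notMem (hI : Borel I) {v : Mon} {h : ℕ} (hv : v ∈ I.carrier)
    (hvh : v h ≠ 0) (hsupp : ∀ j, v j ≠ 0 → j ≤ h) (hsub : v - e h ∉ I.carrier) :
    v ∈ minGens I :=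
  mem_minGens_iff.2 ⟨hv, fun j hj hj' =>
    hsub (hI.sub_e_mem_of_le hj' (I.vars_mem v hv j hj).1 (hsupp j hj) hj hvh)⟩

lemma mmax_le {m : Mon} {b : ℕ} (hb : ∀ i, m i ≠ 0 → i ≤ b) : mmax m ≤ b := by
  rcases (msupp m).eq_empty_or_nonempty with hE | hN
  · simp [mmax, hE]
  · exact csSup_le hN hb

lemma le_mmax {m : Mon} {i b : ℕ} (hi : m i ≠ 0) (hb : ∀ j, m j ≠ 0 → j ≤ b) : i ≤ mmax m :=
  le_csSup ⟨b, hb⟩ hi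

lemma mmax_le_of_mem {m : Mon} (hm : m ∈ I.carrier) : mmax m ≤ n :=
  mmax_le fun i hi => (I.vars_mem m hm i hi).2

variable (I) in
lemma hMax_le : hMax I ≤ n :=
  csSup_le' fun _ ⟨_, hm, hj⟩ => hj ▸ mmax_le_of_mem hm.1

lemma le_hMax {m : Mon} (hm : m ∈ minGens I) {i : ℕ} (hi : m i ≠ 0) : i ≤ hMax I :=
  (le_mmax hi fun j hj => (I.vars_mem m hm.1 j hj).2).trans <|
    le_csSup ⟨n, fun _ ⟨_, hm', hj⟩ => hj ▸ mmax_le_of_mem hm'.1⟩ ⟨m, hm, rfl⟩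

end MonIdeal

lemma apply_ne_zero_of_sub_e_add_e_succ_add_xpw {m : Mon} {k h l j : ℕ}
    (hj : (m - e k + e (k + 1) + xpw h l) j ≠ 0) : m j ≠ 0 ∨ j = k + 1 ∨ j = h := by
  simp only [Pi.add_apply, Pi.sub_apply, e, xpw] at hj
  split_ifs at hj <;> omega

lemma xpw_zero (h : ℕ) : xpw h 0 = 0 := by
  funext i
  simp [xpw]

lemma xpw_succ (h l : ℕ) : xpw h (l + 1) = xpw h l + e h := by
  funext i
  simp only [xpw, e, Pi.add_apply]
  split_ifs <;> rfl

theorem statement14_general {n : ℕ} (I : MonIdeal n) (hI : Borel I)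
    (h : ℕ) (hh : hMax I = h)
    (lI : ℕ) (hCM : xpw h lI ∈ minGens I) :
    ∀ m ∈ minGens I, ∀ k, m k ≠ 0 → k < h →
      ∃ l : ℕ, ((m - e k) + e (k + 1)) + xpw h l ∈ minGens I := by
  intro m hm k hk hkh
  set w : ℕ → Mon := fun l => m - e k + e (k + 1) + xpw h l with hw
  have hk1 : 1 ≤ k := (I.vars_mem m hm.1 k hk).1
  have hsupp : ∀ l j, w l j ≠ 0 → j ≤ h := fun l j hj => by
    rcases apply_ne_zero_of_sub_e_add_e_succ_add_xpw hj with hmj | rfl | rfl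
    exacts [hh ▸ le_hMax hm hmj, hkh, le_rfl]
  have hwI : w lI ∈ I.carrier := by
    refine mem_of_le I hCM.1 (fun i => by simp [hw]) fun i hi => ⟨?_, ?_⟩
    · rcases apply_ne_zero_of_sub_e_add_e_succ_add_xpw hi with hmi | rfl | rfl
      exacts [(I.vars_mem m hm.1 i hmi).1, by omega, by omega]
    · exact (hsupp lI i hi).trans (hh ▸ hMax_le I)
  classical
  have hex : ∃ l, w l ∈ I.carrier := ⟨lI, hwI⟩
  refine ⟨Nat.find hex, ?_⟩
  have hfind := Nat.find_spec hex
  rcases hl : Nat.find hex with _ | l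
  · simp only [hl, hw, xpw_zero, add_zero] at hfind ⊢
    exact hI.sub_e_add_e_succ_mem_minGens hm hk1 hk hfind
  · rw [hl] at hfind
    refine hI.mem_minGens_of_sub_e_notMem hfind (by simp [xpw, e]) (hsupp (l + 1)) ?_
    have hprev : w (l + 1) - e h = w l := by
      simp only [hw, xpw_succ, ← add_assoc, add_tsub_cancel_right]
    exact hprev ▸ Nat.find_min hex (by omega : l < Nat.find hex)

/-- Let `I` be a Borel fixed ideal, `h = max{max(m) : m ∈ G(I)}`, and
suppose `x_h^{l_I} ∈ G(I)` for some `l_I > 0` (the Cohen–Macaulay condition). Then for every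
`m ∈ G(I)` and every `k ∈ supp(m)` with `k < h` there is `l ≥ 0` with
`(m/x_k)·x_{k+1}·x_h^l ∈ G(I)`. -/
theorem statement14 {n : ℕ} (I : MonIdeal n) (hI : Borel I)
    (h : ℕ) (hh : hMax I = h)
    (lI : ℕ) (hlI : 0 < lI) (hCM : xpw h lI ∈ minGens I) :
    ∀ m ∈ minGens I, ∀ k, m k ≠ 0 → k < h →
      ∃ l : ℕ, ((m - e k) + e (k + 1)) + xpw h l ∈ minGens I :=
  statement14_general I hI h hh lI hCM

end Paper
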